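/- arXiv:2010.13661 — 4 statements merged into one kernel-verified Lean document; each statement's English description precedes it below -/
import Mathlib

section
/- Let σ, τ be permutations of {1,…,n}. The following are equivalent: (i) the partition Π({σ,τ}) of {1,…,n} into orbits of the subgroup generated by σ and τ equals the partition Π(στ⁻¹) into orbits of στ⁻¹; (ii) for every k ≥ 0 and every k-tuple (ρ_1,…,ρ_k) of permutations of {1,…,n} with ρ_1⋯ρ_k = στ⁻¹, the partition Π(ρ_1,…,ρ_k) into orbits of the subgroup generated by ρ_1,…,ρ_k is coarser than Π({σ,τ}) (that is, Π({σ,τ}) ≤ Π(ρ_1,…,ρ_k)). -/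
open Equiv Finset
open scoped Classical

namespace PaperHCIZ

variable {α : Type*}

/-- The partition of `α` into orbits of the subgroup generated by a set of permutations. -/
def orbitSetoid (S : Set (Equiv.Perm α)) : Setoid α where
  r x y := ∃ g ∈ Subgroup.closure S, g x = y
  iseqv := by
    refine ⟨fun x => ⟨1, Subgroup.one_mem _, rfl⟩, ?_, ?_⟩
    · rintro x y ⟨g, hg, rfl⟩
      exact ⟨g⁻¹, Subgroup.inv_mem _ hg, by simp⟩
    · rintro x y z ⟨g, hg, rfl⟩ ⟨h, hh, rfl⟩
      exact ⟨h * g, Subgroup.mul_mem _ hh hg, Equiv.Perm.mul_apply h g x⟩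

/-- `#(ν)`: the number of orbits (disjoint cycles, counting fixed points) of a permutation. -/
noncomputable def numOrbits (ν : Equiv.Perm α) : ℕ :=
  Nat.card (Quotient (orbitSetoid ({ν} : Set (Equiv.Perm α))))

/-- `‖ν‖ = |α| - #(ν)`: the minimal number of transpositions whose product is `ν`. -/
noncomputable def len (ν : Equiv.Perm α) : ℕ :=
  Nat.card α - numOrbits ν

/-- the number of blocks of a partition -/
noncomputable def numBlocks (π : Setoid α) : ℕ := Nat.card (Quotient π)

/-- `d_p(ν)`: the number of orbits of size `p`. -/
noncomputable def cycleCount (ν : Equiv.Perm α) (p : ℕ) : ℕ :=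
  Nat.card {q : Quotient (orbitSetoid ({ν} : Set (Equiv.Perm α))) //
    Nat.card {x : α // Quotient.mk (orbitSetoid ({ν} : Set (Equiv.Perm α))) x = q} = p}

/-- The restriction of a permutation to a block of a partition whose blocks it stabilizes
(junk value `1` if it does not stabilize the block). -/
noncomputable def blockRestrict (π : Setoid α) (ν : Equiv.Perm α) (q : Quotient π) :
    Equiv.Perm {x : α // Quotient.mk π x = q} :=
  if h : ∀ x : α, Quotient.mk π x = q ↔ Quotient.mk π (ν x) = q
  then ν.subtypePerm (fun x => (h x).symm) else 1

/-- A sequence of transpositions `(p₁ q₁), …, (pₘ qₘ)`, with `pᵢ < qᵢ`, having weakly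
monotone maxima `q₁ ≤ q₂ ≤ … ≤ qₘ`. -/
def IsMonotoneSeq {β : Type*} [LinearOrder β] (L : List (Equiv.Perm β)) : Prop :=
  ∃ pq : List (β × β),
    L = pq.map (fun x => Equiv.swap x.1 x.2) ∧
    (∀ x ∈ pq, x.1 < x.2) ∧
    List.Chain' (· ≤ ·) (pq.map Prod.snd)

/-- The multiset of orbit sizes of a permutation of a finite set. -/
noncomputable def orbitSizes {β : Type*} [Finite β] (ν : Equiv.Perm β) : Multiset ℕ :=
  letI : Fintype (Quotient (orbitSetoid ({ν} : Set (Equiv.Perm β)))) := Fintype.ofFinite _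
  (Finset.univ.val).map fun q : Quotient (orbitSetoid ({ν} : Set (Equiv.Perm β))) =>
    Nat.card {x : β // Quotient.mk (orbitSetoid ({ν} : Set (Equiv.Perm β))) x = q}

variable {n D : ℕ}

/-- The partition `Π(σ,τ)` into orbits of the subgroup generated by all `σ_c, τ_c`. -/
def jointSetoid (σ τ : Fin D → Equiv.Perm (Fin n)) : Setoid (Fin n) :=
  orbitSetoid (Set.range σ ∪ Set.range τ)

/-- `m_C(σ,τ;l,k)` -/
noncomputable def mC (σ τ : Fin D → Equiv.Perm (Fin n)) (l k : ℕ) : ℕ :=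
  Nat.card {ρ : Fin D → List (Equiv.Perm (Fin n)) //
    (∀ c, ∀ r ∈ ρ c, r ≠ 1) ∧
    (∀ c, (ρ c).prod = σ c * (τ c)⁻¹) ∧
    (∑ c, (ρ c).length) = k ∧
    (∑ c, ((ρ c).map len).sum) = l ∧
    orbitSetoid (Set.range σ ∪ Set.range τ ∪ ⋃ c, {r | r ∈ ρ c}) = ⊤}

/-- `p_C(σ,τ;l)` -/
noncomputable def pC (σ τ : Fin D → Equiv.Perm (Fin n)) (l : ℕ) : ℕ :=
  Nat.card {μ : Fin D → List (Equiv.Perm (Fin n)) //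
    (∀ c, IsMonotoneSeq (μ c)) ∧
    (∀ c, σ c = (μ c).prod * τ c) ∧
    (∑ c, (μ c).length) = l ∧
    orbitSetoid (Set.range σ ∪ Set.range τ ∪ ⋃ c, {r | r ∈ μ c}) = ⊤}

/-- `γ_l(ν;k)`: transitive proper factorizations of `ν` into `k` factors of total length `l`. -/
noncomputable def gammaK {β : Type*} (ν : Equiv.Perm β) (l k : ℕ) : ℕ :=
  Nat.card {ρ : List (Equiv.Perm β) //
    ρ.length = k ∧ (∀ r ∈ ρ, r ≠ 1) ∧ ρ.prod = ν ∧
    (ρ.map len).sum = l ∧ orbitSetoid {r | r ∈ ρ} = ⊤}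

/-- `γ_l(ν) = ∑_k (-1)^k γ_l(ν;k)` -/
noncomputable def gammaAlt {β : Type*} (ν : Equiv.Perm β) (l : ℕ) : ℤ :=
  ∑ k ∈ Finset.range (l + 1), (-1 : ℤ) ^ k * gammaK ν l k

/-- `p(ν;l)`: monotone factorizations of `ν` into `l` transpositions. -/
noncomputable def pNum {β : Type*} [LinearOrder β] (ν : Equiv.Perm β) (l : ℕ) : ℕ :=
  Nat.card {L : List (Equiv.Perm β) // L.length = l ∧ IsMonotoneSeq L ∧ L.prod = ν}

/-- `p_C(σ,τ;l)` in the one-color case `D = 1`. -/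
noncomputable def pC1 (σ τ : Equiv.Perm (Fin n)) (l : ℕ) : ℕ :=
  Nat.card {μ : List (Equiv.Perm (Fin n)) //
    μ.length = l ∧ IsMonotoneSeq μ ∧ σ = μ.prod * τ ∧
    orbitSetoid ({σ, τ} ∪ {r | r ∈ μ}) = ⊤}

/-- `m_C(σ,τ;l,k)` in the one-color case `D = 1`. -/
noncomputable def mC1 (σ τ : Equiv.Perm (Fin n)) (l k : ℕ) : ℕ :=
  Nat.card {ρ : List (Equiv.Perm (Fin n)) //
    ρ.length = k ∧ (∀ r ∈ ρ, r ≠ 1) ∧ ρ.prod = σ * τ⁻¹ ∧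
    (ρ.map len).sum = l ∧ orbitSetoid ({σ, τ} ∪ {r | r ∈ ρ}) = ⊤}

/-- `h_g(ν)`: genus-`g` monotone single Hurwitz count of a permutation of a finite
linearly ordered set. -/
noncomputable def hg {β : Type*} [LinearOrder β] (ν : Equiv.Perm β) (g : ℕ) : ℕ :=
  Nat.card {L : List (Equiv.Perm β) //
    L.length = Nat.card β + numOrbits ν + 2 * g - 2 ∧
    IsMonotoneSeq L ∧ L.prod = ν ∧ orbitSetoid {r | r ∈ L} = ⊤}


/-- `Π({σ,τ}) = Π(στ⁻¹)` iff every factorization `ρ₁⋯ρ_k = στ⁻¹`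
has orbit partition coarser than `Π({σ,τ})`. -/
theorem statement3 {n : ℕ} (hn : 1 ≤ n) (σ τ : Equiv.Perm (Fin n)) :
    orbitSetoid ({σ, τ} : Set (Equiv.Perm (Fin n))) =
      orbitSetoid ({σ * τ⁻¹} : Set (Equiv.Perm (Fin n))) ↔
    ∀ ρ : List (Equiv.Perm (Fin n)), ρ.prod = σ * τ⁻¹ →
      orbitSetoid ({σ, τ} : Set (Equiv.Perm (Fin n))) ≤ orbitSetoid {r | r ∈ ρ} := by
  have hmem : σ * τ⁻¹ ∈ Subgroup.closure ({σ, τ} : Set (Equiv.Perm (Fin n))) :=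
    mul_mem (Subgroup.subset_closure (by simp)) (inv_mem (Subgroup.subset_closure (by simp)))
  have hle : ∀ (S T : Set (Equiv.Perm (Fin n))), Subgroup.closure S ≤ Subgroup.closure T →
      orbitSetoid S ≤ orbitSetoid T := by
    intro S T hST x y hxy
    obtain ⟨g, hg, rfl⟩ := hxy
    exact ⟨g, hST hg, rfl⟩
  constructor
  · intro h ρ hρ
    rw [h]
    apply hle
    rw [Subgroup.closure_le]
    intro z hz
    simp only [Set.mem_singleton_iff] at hz
    subst hz
    rw [← hρ]
    exact Subgroup.list_prod_mem _ (fun r hr => Subgroup.subset_closure hr)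
  · intro h
    apply le_antisymm
    · have := h [σ * τ⁻¹] (by simp)
      have hset : ({r | r ∈ [σ * τ⁻¹]} : Set (Equiv.Perm (Fin n))) = {σ * τ⁻¹} := by
        ext r; simp
      rwa [hset] at this
    · apply hle
      rw [Subgroup.closure_le]
      intro z hz
      simp only [Set.mem_singleton_iff] at hz
      subst hz
      exact hmem

end PaperHCIZ
end

section
/- Let σ, τ be permutations of {1,…,n} such that the partition Π({σ,τ}) into orbits of the subgroup generated by σ and τ equals the partition Π(στ⁻¹) into orbits of στ⁻¹. Then for all integers l, k ≥ 0, m_C(σ,τ;l,k) = γ_l(στ⁻¹;k), where γ_l(ν;k) is the number of k-tuples (ρ_1,…,ρ_k) of permutations of {1,…,n}, all different from the identity, with ρ_1⋯ρ_k = ν, ∑_i ‖ρ_i‖ = l, and such that the subgroup generated by ρ_1,…,ρ_k acts transitively on {1,…,n}. -/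
open Equiv Finset
open scoped Classical

namespace PaperHCIZ

variable {α : Type*}

variable {n D : ℕ}

lemma orbit_rel_mono {S T : Set (Equiv.Perm α)} (hST : S ⊆ T) {x y : α}
    (h : (orbitSetoid S).r x y) : (orbitSetoid T).r x y := by
  obtain ⟨g, hg, rfl⟩ := h
  exact ⟨g, Subgroup.closure_mono hST hg, rfl⟩

lemma orbit_rel_of_gen {S T : Set (Equiv.Perm α)}
    (h : ∀ g ∈ S, ∀ x, (orbitSetoid T).r x (g x)) :
    ∀ g ∈ Subgroup.closure S, ∀ x, (orbitSetoid T).r x (g x) := by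
  intro g hg
  induction hg using Subgroup.closure_induction with
  | mem g hgS => exact h g hgS
  | one => exact fun x => (orbitSetoid T).refl x
  | mul g h _ _ hg hh =>
      intro x
      exact (orbitSetoid T).trans (hh x) (hg (h x))
  | inv g _ hg =>
      intro x
      have := hg (g⁻¹ x)
      rw [← Equiv.Perm.mul_apply, mul_inv_cancel, Equiv.Perm.one_apply] at this
      exact (orbitSetoid T).symm this

/-- if `Π({σ,τ}) = Π(στ⁻¹)` then `m_C(σ,τ;l,k) = γ_l(στ⁻¹;k)`. -/
theorem statement4 {n : ℕ} (hn : 1 ≤ n) (σ τ : Equiv.Perm (Fin n))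
    (hPi : orbitSetoid ({σ, τ} : Set (Equiv.Perm (Fin n))) =
      orbitSetoid ({σ * τ⁻¹} : Set (Equiv.Perm (Fin n)))) :
    ∀ l k : ℕ, mC1 σ τ l k = gammaK (σ * τ⁻¹) l k := by
  intro l k
  unfold mC1 gammaK
  apply Nat.card_congr
  apply Equiv.subtypeEquivRight
  intro ρ
  constructor
  · rintro ⟨h1, h2, h3, h4, h5⟩
    refine ⟨h1, h2, h3, h4, ?_⟩
    -- big orbit setoid = ⊤ implies small one = ⊤
    have hprod : σ * τ⁻¹ ∈ Subgroup.closure {r | r ∈ ρ} := by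
      rw [← h3]
      exact Subgroup.list_prod_mem _ fun x hx => Subgroup.subset_closure hx
    have hgen : ∀ g ∈ ({σ, τ} ∪ {r | r ∈ ρ} : Set (Equiv.Perm (Fin n))),
        ∀ x, (orbitSetoid {r | r ∈ ρ}).r x (g x) := by
      intro g hg x
      rcases hg with hg | hg
      · -- g = σ or g = τ : use hPi
        have hστ : (orbitSetoid ({σ, τ} : Set (Equiv.Perm (Fin n)))).r x (g x) := by
          rcases hg with rfl | rfl
          · exact ⟨g, Subgroup.subset_closure (Set.mem_insert _ _), rfl⟩
          · exact ⟨g, Subgroup.subset_closure (Set.mem_insert_of_mem _ rfl), rfl⟩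
        rw [hPi] at hστ
        obtain ⟨h, hh, hhx⟩ := hστ
        refine ⟨h, ?_, hhx⟩
        have : Subgroup.closure ({σ * τ⁻¹} : Set (Equiv.Perm (Fin n))) ≤
            Subgroup.closure {r | r ∈ ρ} := by
          rw [Subgroup.closure_le]
          intro z hz
          rcases hz with rfl
          exact hprod
        exact this hh
      · exact ⟨g, Subgroup.subset_closure hg, rfl⟩
    refine Setoid.eq_top_iff.mpr ?_
    intro x y
    have hxy : (orbitSetoid ({σ, τ} ∪ {r | r ∈ ρ} : Set (Equiv.Perm (Fin n)))).r x y := by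
      rw [h5]; trivial
    obtain ⟨g, hg, rfl⟩ := hxy
    exact orbit_rel_of_gen hgen g hg x
  · rintro ⟨h1, h2, h3, h4, h5⟩
    refine ⟨h1, h2, h3, h4, ?_⟩
    refine Setoid.eq_top_iff.mpr ?_
    intro x y
    have : (orbitSetoid ({r | r ∈ ρ} : Set (Equiv.Perm (Fin n)))).r x y := by
      rw [h5]; trivial
    exact orbit_rel_mono Set.subset_union_right this

end PaperHCIZ
end

section
/- Fix integers n ≥ 1, D ≥ 1 and D-tuples σ, τ of permutations of {1,…,n}, and set ℓ(σ,τ) = ∑_{c=1}^D ‖σ_c τ_c⁻¹‖ + 2(|Π(σ,τ)| − 1). Then for all integers l, k ≥ 0, m_C(σ,τ;l,k) = 0 unless l ≥ ℓ(σ,τ) and l − ℓ(σ,τ) is even. Equivalently: for every D-tuple of finite sequences (ρ^c_1,…,ρ^c_{k_c}) of permutations of {1,…,n}, all different from the identity, with ρ^c_1⋯ρ^c_{k_c} = σ_c τ_c⁻¹ for every c and such that the subgroup generated by all σ_c, τ_c, ρ^c_i is transitive on {1,…,n}, the total length ∑_{c,i} ‖ρ^c_i‖ is at least ℓ(σ,τ)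 and has the same parity as ℓ(σ,τ). -/
open Equiv Finset
open scoped Classical

namespace PaperHCIZ

variable {α : Type*}

variable {n D : ℕ}

/-! ### Auxiliary machinery for `statement9` -/

section Statement9Aux

variable {α : Type*} [DecidableEq α]

lemma orbitSetoid_rel' {S : Set (Perm α)} {x y : α} :
    orbitSetoid S x y ↔ ∃ g ∈ Subgroup.closure S, g x = y := Iff.rfl

lemma rel_of_mem_closure {S : Set (Perm α)} {g : Perm α}
    (hg : g ∈ Subgroup.closure S) (x : α) : orbitSetoid S x (g x) := ⟨g, hg, rfl⟩

lemma rel_of_mem {S : Set (Perm α)} {g : Perm α} (hg : g ∈ S) (x : α) :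
    orbitSetoid S x (g x) := ⟨g, Subgroup.subset_closure hg, rfl⟩

lemma orbitSetoid_le {S : Set (Perm α)} {t : Setoid α}
    (h : ∀ g ∈ S, ∀ x, t x (g x)) : orbitSetoid S ≤ t := by
  have key : ∀ g ∈ Subgroup.closure S, ∀ x, t x (g x) := by
    intro g hg
    induction hg using Subgroup.closure_induction with
    | mem g hg => exact h g hg
    | one => exact fun x => t.refl' x
    | mul g g' hgm hgm' ihg ihg' => exact fun x => t.trans' (ihg' x) (ihg (g' x))
    | inv g hgm ihg =>
        intro x
        have := ihg (g⁻¹ x)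
        rw [show g (g⁻¹ x) = x from Equiv.apply_symm_apply g x] at this
        exact t.symm' this
  rintro x y ⟨g, hg, rfl⟩
  exact key g hg x

lemma orbitSetoid_singleton_rel {π : Perm α} {x y : α} :
    orbitSetoid {π} x y ↔ π.SameCycle x y := by
  constructor
  · rintro ⟨g, hg, rfl⟩
    rw [Subgroup.mem_closure_singleton] at hg
    obtain ⟨k, rfl⟩ := hg
    exact ⟨k, rfl⟩
  · rintro ⟨k, rfl⟩
    exact ⟨π ^ k, Subgroup.mem_closure_singleton.2 ⟨k, rfl⟩, rfl⟩

lemma orbitSetoid_singleton_le {π : Perm α} {t : Setoid α}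
    (h : ∀ x, t x (π x)) : orbitSetoid {π} ≤ t :=
  orbitSetoid_le (by rintro g rfl; exact h)

lemma orbitSetoid_mono {S T : Set (Perm α)} (h : S ⊆ T) : orbitSetoid S ≤ orbitSetoid T :=
  orbitSetoid_le fun g hg x => rel_of_mem (h hg) x

lemma orbitSetoid_union (S T : Set (Perm α)) :
    orbitSetoid (S ∪ T) = orbitSetoid S ⊔ orbitSetoid T := by
  apply le_antisymm
  · apply orbitSetoid_le
    rintro g (hg | hg) x
    · exact Setoid.le_def.mp le_sup_left (rel_of_mem hg x)
    · exact Setoid.le_def.mp le_sup_right (rel_of_mem hg x)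
  · exact sup_le (orbitSetoid_mono Set.subset_union_left)
      (orbitSetoid_mono Set.subset_union_right)

set_option maxHeartbeats 1000000 in
lemma orbitSetoid_mul_le (π ρ : Perm α) :
    orbitSetoid {π * ρ} ≤ orbitSetoid {π} ⊔ orbitSetoid {ρ} := by
  apply orbitSetoid_singleton_le
  intro x
  have h1 : orbitSetoid {ρ} x (ρ x) := rel_of_mem (Set.mem_singleton ρ) x
  have h2 : orbitSetoid {π} (ρ x) (π (ρ x)) := rel_of_mem (Set.mem_singleton π) (ρ x)
  have h1' : (orbitSetoid {π} ⊔ orbitSetoid {ρ}) x (ρ x) := Setoid.le_def.mp le_sup_right h1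
  have h2' : (orbitSetoid {π} ⊔ orbitSetoid {ρ}) (ρ x) (π (ρ x)) := Setoid.le_def.mp le_sup_left h2
  exact Setoid.trans' _ h1' h2'

def edgeSetoid (a b : α) : Setoid α where
  r x y := x = y ∨ (x = a ∧ y = b) ∨ (x = b ∧ y = a)
  iseqv := by
    refine ⟨fun x => Or.inl rfl, ?_, ?_⟩
    · rintro x y (rfl | ⟨rfl, rfl⟩ | ⟨rfl, rfl⟩) <;> tauto
    · rintro x y z (rfl | ⟨rfl, rfl⟩ | ⟨rfl, rfl⟩) (h | ⟨h1, h2⟩ | ⟨h1, h2⟩) <;>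
        subst_vars <;> tauto

lemma edgeSetoid_rel_left (a b : α) : edgeSetoid a b a b := Or.inr (Or.inl ⟨rfl, rfl⟩)

def supEdge (u : Setoid α) (a b : α) : Setoid α where
  r x y := u x y ∨ (u x a ∧ u b y) ∨ (u x b ∧ u a y)
  iseqv := by
    refine ⟨fun x => Or.inl (u.refl' x), ?_, ?_⟩
    · rintro x y (h | ⟨h1, h2⟩ | ⟨h1, h2⟩)
      · exact Or.inl (u.symm' h)
      · exact Or.inr (Or.inr ⟨u.symm' h2, u.symm' h1⟩)
      · exact Or.inr (Or.inl ⟨u.symm' h2, u.symm' h1⟩)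
    · rintro x y z (h | ⟨h1, h2⟩ | ⟨h1, h2⟩) (h' | ⟨h1', h2'⟩ | ⟨h1', h2'⟩)
      · exact Or.inl (u.trans' h h')
      · exact Or.inr (Or.inl ⟨u.trans' h h1', h2'⟩)
      · exact Or.inr (Or.inr ⟨u.trans' h h1', h2'⟩)
      · exact Or.inr (Or.inl ⟨h1, u.trans' h2 h'⟩)
      · exact Or.inl (u.trans' h1 (u.trans' (u.symm' (u.trans' h2 h1')) h2'))
      · exact Or.inl (u.trans' h1 h2')
      · exact Or.inr (Or.inr ⟨h1, u.trans' h2 h'⟩)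
      · exact Or.inl (u.trans' h1 h2')
      · exact Or.inl (u.trans' h1 (u.trans' (u.symm' (u.trans' h2 h1')) h2'))

lemma sup_edge_eq (u : Setoid α) (a b : α) : u ⊔ edgeSetoid a b = supEdge u a b := by
  apply le_antisymm
  · refine sup_le (fun x y h => Or.inl h) ?_
    rintro x y (rfl | ⟨rfl, rfl⟩ | ⟨rfl, rfl⟩)
    · exact Or.inl (u.refl' x)
    · exact Or.inr (Or.inl ⟨u.refl' _, u.refl' _⟩)
    · exact Or.inr (Or.inr ⟨u.refl' _, u.refl' _⟩)
  · rintro x y (h | ⟨h1, h2⟩ | ⟨h1, h2⟩)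
    · exact Setoid.le_def.mp le_sup_left h
    · exact (u ⊔ edgeSetoid a b).trans' (Setoid.le_def.mp le_sup_left h1)
        ((u ⊔ edgeSetoid a b).trans'
          (Setoid.le_def.mp le_sup_right (edgeSetoid_rel_left a b))
          (Setoid.le_def.mp le_sup_left h2))
    · exact (u ⊔ edgeSetoid a b).trans' (Setoid.le_def.mp le_sup_left h1)
        ((u ⊔ edgeSetoid a b).trans'
          ((u ⊔ edgeSetoid a b).symm' (Setoid.le_def.mp le_sup_right (edgeSetoid_rel_left a b)))
          (Setoid.le_def.mp le_sup_left h2))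

lemma sup_edge_rel {u : Setoid α} {a b x y : α} :
    (u ⊔ edgeSetoid a b) x y ↔ (u x y ∨ (u x a ∧ u b y) ∨ (u x b ∧ u a y)) := by
  rw [sup_edge_eq]; exact Iff.rfl

lemma sup_edge_of_rel {u : Setoid α} {a b : α} (h : u a b) : u ⊔ edgeSetoid a b = u := by
  refine sup_eq_left.2 ?_
  rintro x y (rfl | ⟨rfl, rfl⟩ | ⟨rfl, rfl⟩)
  exacts [u.refl' x, h, u.symm' h]

lemma orbitSetoid_swap (a b : α) : orbitSetoid {Equiv.swap a b} = edgeSetoid a b := by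
  apply le_antisymm
  · apply orbitSetoid_singleton_le
    intro x
    by_cases hxa : x = a
    · exact Or.inr (Or.inl ⟨hxa, by rw [hxa, swap_apply_left]⟩)
    by_cases hxb : x = b
    · exact Or.inr (Or.inr ⟨hxb, by rw [hxb, swap_apply_right]⟩)
    · exact Or.inl (swap_apply_of_ne_of_ne hxa hxb).symm
  · rintro x y (rfl | ⟨rfl, rfl⟩ | ⟨rfl, rfl⟩)
    · exact (orbitSetoid _).refl' x
    · exact ⟨Equiv.swap _ _, Subgroup.subset_closure rfl, swap_apply_left _ _⟩
    · exact ⟨Equiv.swap _ _, Subgroup.subset_closure rfl, swap_apply_right _ _⟩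

/-! #### counting blocks -/

noncomputable def nbMap {s t : Setoid α} (h : s ≤ t) : Quotient s → Quotient t :=
  fun q => Quotient.liftOn q (fun x => Quotient.mk t x) fun _ _ hab => Quot.sound (h hab)

lemma nbMap_mk {s t : Setoid α} (h : s ≤ t) (x : α) :
    nbMap h (Quotient.mk s x) = Quotient.mk t x := rfl

lemma nbMap_surj {s t : Setoid α} (h : s ≤ t) : Function.Surjective (nbMap h) := by
  rintro ⟨x⟩; exact ⟨Quotient.mk s x, rfl⟩

lemma numBlocks_mono [Finite α] {s t : Setoid α} (h : s ≤ t) : numBlocks t ≤ numBlocks s :=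
  Nat.card_le_card_of_surjective _ (nbMap_surj h)

lemma numBlocks_pos [Finite α] [Nonempty α] (s : Setoid α) : 1 ≤ numBlocks s := by
  have : Nonempty (Quotient s) := ⟨Quotient.mk s (Classical.arbitrary α)⟩
  exact Nat.card_pos

lemma numBlocks_add_one_le [Finite α] {s t : Setoid α} (h : s ≤ t) {a b : α}
    (hab : t a b) (hnab : ¬ s a b) : numBlocks t + 1 ≤ numBlocks s := by
  classical
  have hfab : nbMap h (Quotient.mk s a) = nbMap h (Quotient.mk s b) := Quot.sound hab
  have hne : (Quotient.mk s a) ≠ (Quotient.mk s b) := fun hq => hnab (Quotient.exact hq)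
  have hsurj : Function.Surjective
      (fun q : {q : Quotient s // q ≠ Quotient.mk s b} => nbMap h q.1) := by
    intro w
    obtain ⟨q, rfl⟩ := nbMap_surj h w
    by_cases hq : q = Quotient.mk s b
    · refine ⟨⟨Quotient.mk s a, hne⟩, ?_⟩
      show nbMap h (Quotient.mk s a) = nbMap h q
      rw [hq]; exact hfab
    · exact ⟨⟨q, hq⟩, rfl⟩
  have h1 : numBlocks t ≤ Nat.card {q : Quotient s // q ≠ Quotient.mk s b} :=
    Nat.card_le_card_of_surjective _ hsurj
  have hfin : Finite (Quotient s) := Quotient.finite s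
  letI : Fintype (Quotient s) := Fintype.ofFinite _
  have h2 : Nat.card {q : Quotient s // q ≠ Quotient.mk s b}
      = numBlocks s - 1 := by
    rw [Nat.card_eq_fintype_card]
    have hc := Fintype.card_subtype_compl (fun q : Quotient s => q = Quotient.mk s b)
    rw [Fintype.card_subtype_eq] at hc
    rw [hc]
    simp [numBlocks, Nat.card_eq_fintype_card]
  have h3 : 1 ≤ numBlocks s := by
    have : Nonempty (Quotient s) := ⟨Quotient.mk s b⟩
    exact Nat.card_pos
  omega

lemma numBlocks_sub_one_le [Finite α] (u : Setoid α) (a b : α) :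
    numBlocks u ≤ numBlocks (u ⊔ edgeSetoid a b) + 1 := by
  classical
  set e := edgeSetoid a b with he
  let f0 : α → Quotient (u ⊔ e) ⊕ Unit :=
    fun x => if u x b then Sum.inr () else Sum.inl (Quotient.mk (u ⊔ e) x)
  have wd : ∀ x y : α, u x y → f0 x = f0 y := by
    intro x y hxy
    by_cases hx : u x b
    · simp only [f0, if_pos hx, if_pos (u.trans' (u.symm' hxy) hx)]
    · simp only [f0, if_neg hx, if_neg (fun hy => hx (u.trans' hxy hy))]
      exact congrArg _ (Quot.sound (Setoid.le_def.mp le_sup_left hxy))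
  let F : Quotient u → Quotient (u ⊔ e) ⊕ Unit := Quotient.lift f0 wd
  have hinj : Function.Injective F := by
    intro q q' hqq
    revert hqq
    refine Quotient.inductionOn₂ q q' ?_
    intro x y hxy
    have hxy' : f0 x = f0 y := hxy
    show Quotient.mk u x = Quotient.mk u y
    by_cases hx : u x b <;> by_cases hy : u y b
    · exact Quot.sound (u.trans' hx (u.symm' hy))
    · rw [show f0 x = Sum.inr () from if_pos hx,
        show f0 y = Sum.inl (Quotient.mk (u ⊔ e) y) from if_neg hy] at hxy'
      exact absurd hxy' (by simp)
    · rw [show f0 x = Sum.inl (Quotient.mk (u ⊔ e) x) from if_neg hx,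
        show f0 y = Sum.inr () from if_pos hy] at hxy'
      exact absurd hxy' (by simp)
    · rw [show f0 x = Sum.inl (Quotient.mk (u ⊔ e) x) from if_neg hx,
        show f0 y = Sum.inl (Quotient.mk (u ⊔ e) y) from if_neg hy] at hxy'
      have hrel : (u ⊔ e) x y := Quotient.exact (Sum.inl.inj hxy')
      rcases sup_edge_rel.mp hrel with hr | ⟨h1, h2⟩ | ⟨h1, h2⟩
      · exact Quot.sound hr
      · exact absurd (u.symm' h2) hy
      · exact absurd h1 hx
  have hcard := Nat.card_le_card_of_injective F hinj
  have hsum : Nat.card (Quotient (u ⊔ e) ⊕ Unit) = numBlocks (u ⊔ e) + 1 := by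
    rw [Nat.card_sum]
    simp [numBlocks]
  rw [hsum] at hcard
  exact hcard

lemma numBlocks_sup_edge_of_not_rel [Finite α] {u : Setoid α} {a b : α} (h : ¬ u a b) :
    numBlocks (u ⊔ edgeSetoid a b) + 1 = numBlocks u := by
  have h1 := numBlocks_add_one_le (le_sup_left : u ≤ u ⊔ edgeSetoid a b)
    (Setoid.le_def.mp le_sup_right (edgeSetoid_rel_left a b)) h
  have h2 := numBlocks_sub_one_le u a b
  omega

end Statement9Aux

section Statement9Walk

variable {α : Type*} [DecidableEq α]

lemma walk_pow {π : Perm α} {a b : α} :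
    ∀ j, 1 ≤ j → (∀ i, 1 ≤ i → i < j → (π ^ i) b ≠ a ∧ (π ^ i) b ≠ b) →
      ((π * Equiv.swap a b) ^ j) a = (π ^ j) b := by
  intro j
  induction j with
  | zero => intro h; omega
  | succ j ih =>
    intro _ h
    rcases Nat.eq_zero_or_pos j with rfl | hj
    · show ((π * Equiv.swap a b) ^ 1) a = (π ^ 1) b
      simp [Equiv.Perm.mul_apply, swap_apply_left]
    · have ihj := ih hj (fun i hi1 hi2 => h i hi1 (by omega))
      have h2 := h j hj (by omega)
      calc ((π * Equiv.swap a b) ^ (j + 1)) a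
          = (π * Equiv.swap a b) (((π * Equiv.swap a b) ^ j) a) := by
            rw [pow_succ', Equiv.Perm.mul_apply]
        _ = (π * Equiv.swap a b) ((π ^ j) b) := by rw [ihj]
        _ = π (Equiv.swap a b ((π ^ j) b)) := Equiv.Perm.mul_apply _ _ _
        _ = π ((π ^ j) b) := by rw [swap_apply_of_ne_of_ne h2.1 h2.2]
        _ = (π ^ (j + 1)) b := by rw [pow_succ', Equiv.Perm.mul_apply]

lemma zpow_fix {g : Perm α} {x : α} (h : g x = x) : ∀ n : ℤ, (g ^ n) x = x := by
  have hinv : g⁻¹ x = x := by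
    nth_rewrite 1 [← h]
    exact Equiv.symm_apply_apply g x
  intro n
  induction n using Int.induction_on with
  | zero => rfl
  | succ n ihn => rw [zpow_add_one, Equiv.Perm.mul_apply, h, ihn]
  | pred n ihn => rw [zpow_sub_one, Equiv.Perm.mul_apply, hinv, ihn]

lemma zpow_apply_reduce {g : Perm α} {x : α} {m : ℕ} (hm : 0 < m)
    (hfix : (g ^ m) x = x) (k : ℤ) :
    ∃ r : ℕ, r < m ∧ (g ^ k) x = (g ^ r) x := by
  have hm' : (0 : ℤ) < (m : ℤ) := by exact_mod_cast hm
  have h0 : 0 ≤ k % (m : ℤ) := Int.emod_nonneg k (by omega)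
  have hlt : k % (m : ℤ) < (m : ℤ) := Int.emod_lt_of_pos k hm'
  refine ⟨(k % (m : ℤ)).toNat, by omega, ?_⟩
  have hfix' : (g ^ (m : ℤ)) x = x := by rw [zpow_natCast]; exact hfix
  have hq : (g ^ ((m : ℤ) * (k / (m : ℤ)))) x = x := by
    rw [zpow_mul]
    exact zpow_fix hfix' _
  have hk : k = k % (m : ℤ) + (m : ℤ) * (k / (m : ℤ)) := by
    rw [add_comm]; exact (Int.mul_ediv_add_emod k (m : ℤ)).symm
  calc (g ^ k) x = (g ^ (k % (m : ℤ) + (m : ℤ) * (k / (m : ℤ)))) x := by rw [← hk]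
    _ = (g ^ (k % (m : ℤ))) ((g ^ ((m : ℤ) * (k / (m : ℤ)))) x) := by
        rw [zpow_add, Equiv.Perm.mul_apply]
    _ = (g ^ (k % (m : ℤ))) x := by rw [hq]
    _ = (g ^ ((k % (m : ℤ)).toNat)) x := by rw [← zpow_natCast, Int.toNat_of_nonneg h0]

variable [Finite α]

lemma period_pos (π : Perm α) (b : α) : 0 < Function.minimalPeriod ⇑π b := by
  apply Function.minimalPeriod_pos_of_mem_periodicPts
  refine Function.mk_mem_periodicPts (orderOf_pos π) ?_
  show (⇑π)^[orderOf π] b = b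
  rw [Equiv.Perm.iterate_eq_pow, pow_orderOf_eq_one]
  rfl

lemma period_fix (π : Perm α) (b : α) : (π ^ Function.minimalPeriod ⇑π b) b = b := by
  have h := Function.iterate_minimalPeriod (f := ⇑π) (x := b)
  rwa [Equiv.Perm.iterate_eq_pow] at h

lemma period_min (π : Perm α) (b : α) {i : ℕ} (h1 : 0 < i)
    (h2 : i < Function.minimalPeriod ⇑π b) : (π ^ i) b ≠ b := by
  intro hc
  refine Function.not_isPeriodicPt_of_pos_of_lt_minimalPeriod (by omega) h2 ?_
  show (⇑π)^[i] b = b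
  rw [Equiv.Perm.iterate_eq_pow]
  exact hc

lemma sameCycle_mul_swap_of_not_sameCycle {π : Perm α} {a b : α} (hab : a ≠ b)
    (h : ¬ π.SameCycle a b) : (π * Equiv.swap a b).SameCycle a b := by
  have hp0 : 0 < Function.minimalPeriod ⇑π b := period_pos π b
  have hfix : (π ^ Function.minimalPeriod ⇑π b) b = b := period_fix π b
  have hint : ∀ i, 1 ≤ i → i < Function.minimalPeriod ⇑π b →
      (π ^ i) b ≠ a ∧ (π ^ i) b ≠ b := by
    intro i hi1 hi2
    refine ⟨?_, period_min π b (by omega) hi2⟩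
    intro hc
    exact h (Equiv.Perm.SameCycle.symm ⟨(i : ℤ), by rw [zpow_natCast]; exact hc⟩)
  have hwalk := walk_pow (π := π) (a := a) (b := b) _ hp0 hint
  exact ⟨(Function.minimalPeriod ⇑π b : ℤ), by rw [zpow_natCast, hwalk]; exact hfix⟩

lemma not_sameCycle_mul_swap {π : Perm α} {a b : α} (hab : a ≠ b)
    (h : π.SameCycle a b) : ¬ (π * Equiv.swap a b).SameCycle a b := by
  set p := Function.minimalPeriod ⇑π b with hpdef
  have hp0 : 0 < p := period_pos π b
  have hfix : (π ^ p) b = b := period_fix π b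
  obtain ⟨k, hk⟩ := h.symm
  obtain ⟨s, hs_lt, hs⟩ := zpow_apply_reduce hp0 hfix k
  rw [hk] at hs
  have hs0 : s ≠ 0 := by
    rintro rfl
    rw [pow_zero] at hs
    exact hab hs
  have hs1 : 1 ≤ s := by omega
  have hint : ∀ i, 1 ≤ i → i < s → (π ^ i) b ≠ a ∧ (π ^ i) b ≠ b := by
    intro i hi1 hi2
    refine ⟨?_, period_min π b (by omega) (by omega)⟩
    intro hc
    have e1 : (π ^ s) b = (π ^ (s - i)) a := by
      rw [← hc, ← Equiv.Perm.mul_apply, ← pow_add]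
      congr 2
      omega
    have hd : (π ^ (s - i)) a = a := by rw [← e1, ← hs]
    have e2 : b = (π ^ (p - s)) a := by
      have : (π ^ (p - s + s)) b = (π ^ (p - s)) ((π ^ s) b) := by
        rw [pow_add, Equiv.Perm.mul_apply]
      rw [show p - s + s = p by omega, hfix, ← hs] at this
      exact this
    have e3 : (π ^ (s - i)) ((π ^ (p - s)) a) = (π ^ (p - s)) ((π ^ (s - i)) a) := by
      rw [← Equiv.Perm.mul_apply, ← Equiv.Perm.mul_apply, ← pow_add, ← pow_add, Nat.add_comm]
    have e4 : (π ^ (s - i)) b = b := by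
      rw [e2, e3, hd]
    exact period_min π b (by omega) (by omega) e4
  have hwalk := walk_pow (π := π) (a := a) (b := b) s hs1 hint
  have hfixa : ((π * Equiv.swap a b) ^ s) a = a := by rw [hwalk, ← hs]
  rintro ⟨k', hk'⟩
  obtain ⟨r, hr_lt, hr⟩ := zpow_apply_reduce (show 0 < s by omega) hfixa k'
  rw [hk'] at hr
  rcases Nat.eq_zero_or_pos r with rfl | hr1
  · rw [pow_zero] at hr
    exact hab hr.symm
  · have hw2 := walk_pow (π := π) (a := a) (b := b) r hr1
      (fun i h1 h2 => hint i h1 (by omega))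
    rw [hw2] at hr
    exact period_min π b hr1 (by omega) hr.symm

lemma orbitSetoid_mul_swap_le (π : Perm α) (a b : α) :
    orbitSetoid {π * Equiv.swap a b} ≤ orbitSetoid {π} ⊔ edgeSetoid a b := by
  rw [← orbitSetoid_swap a b]
  exact orbitSetoid_mul_le _ _

lemma orbitSetoid_le_mul_swap (π : Perm α) (a b : α) :
    orbitSetoid {π} ≤ orbitSetoid {π * Equiv.swap a b} ⊔ edgeSetoid a b := by
  have h : π = (π * Equiv.swap a b) * Equiv.swap a b := by
    rw [mul_assoc, swap_mul_self, mul_one]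
  calc orbitSetoid {π} = orbitSetoid {(π * Equiv.swap a b) * Equiv.swap a b} := by rw [← h]
    _ ≤ _ := by rw [← orbitSetoid_swap a b]; exact orbitSetoid_mul_le _ _

lemma orbitSetoid_mul_swap_join {π : Perm α} {a b : α} (hab : a ≠ b)
    (h : ¬ π.SameCycle a b) :
    orbitSetoid {π * Equiv.swap a b} = orbitSetoid {π} ⊔ edgeSetoid a b := by
  apply le_antisymm (orbitSetoid_mul_swap_le π a b)
  have hedge : edgeSetoid a b ≤ orbitSetoid {π * Equiv.swap a b} := by
    rintro x y (rfl | ⟨hx, hy⟩ | ⟨hx, hy⟩)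
    · exact Setoid.refl' _ _
    · rw [hx, hy]
      exact orbitSetoid_singleton_rel.mpr (sameCycle_mul_swap_of_not_sameCycle hab h)
    · rw [hx, hy]
      exact Setoid.symm' _
        (orbitSetoid_singleton_rel.mpr (sameCycle_mul_swap_of_not_sameCycle hab h))
  refine sup_le ?_ hedge
  have h2 := orbitSetoid_le_mul_swap π a b
  rwa [sup_eq_left.mpr hedge] at h2

lemma numOrbits_mul_swap_cut {π : Perm α} {a b : α} (hab : a ≠ b)
    (h : π.SameCycle a b) :
    numOrbits π + 1 ≤ numOrbits (π * Equiv.swap a b) := by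
  have hle : orbitSetoid {π * Equiv.swap a b} ≤ orbitSetoid {π} := by
    have h1 := orbitSetoid_mul_swap_le π a b
    rwa [sup_edge_of_rel (orbitSetoid_singleton_rel.mpr h)] at h1
  exact numBlocks_add_one_le hle (orbitSetoid_singleton_rel.mpr h)
    (fun hc => not_sameCycle_mul_swap hab h (orbitSetoid_singleton_rel.mp hc))

lemma numOrbits_le_mul_swap_add_one (π : Perm α) (a b : α) :
    numOrbits π ≤ numOrbits (π * Equiv.swap a b) + 1 := by
  have h2 := numBlocks_sub_one_le (orbitSetoid {π}) a b
  have h3 := numBlocks_mono (orbitSetoid_mul_swap_le π a b)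
  have e1 : numOrbits π = numBlocks (orbitSetoid {π}) := rfl
  have e2 : numOrbits (π * Equiv.swap a b) = numBlocks (orbitSetoid {π * Equiv.swap a b}) := rfl
  omega

lemma numOrbits_mul_swap_le_add_one (π : Perm α) (a b : α) :
    numOrbits (π * Equiv.swap a b) ≤ numOrbits π + 1 := by
  have h2 := numBlocks_sub_one_le (orbitSetoid {π * Equiv.swap a b}) a b
  have h3 := numBlocks_mono (orbitSetoid_le_mul_swap π a b)
  have e1 : numOrbits π = numBlocks (orbitSetoid {π}) := rfl
  have e2 : numOrbits (π * Equiv.swap a b) = numBlocks (orbitSetoid {π * Equiv.swap a b}) := rfl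
  omega

end Statement9Walk

section Statement9Card

variable {α : Type*} [DecidableEq α]

lemma numBlocks_bot : numBlocks (⊥ : Setoid α) = Nat.card α := by
  apply Nat.card_congr
  refine Equiv.ofBijective
    (fun q => Quotient.liftOn q id fun x y hxy => by
      have h2 : ⇑(⊥ : Setoid α) x y := hxy
      rw [Setoid.bot_def] at h2
      exact h2) ⟨?_, ?_⟩
  · intro q q' hqq
    revert hqq
    refine Quotient.inductionOn₂ q q' ?_
    intro x y hxy
    exact congrArg (Quotient.mk ⊥) (hxy : x = y)
  · exact fun x => ⟨Quotient.mk ⊥ x, rfl⟩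

variable [Finite α]

lemma numBlocks_le_card (s : Setoid α) : numBlocks s ≤ Nat.card α := by
  have := numBlocks_mono (bot_le : ⊥ ≤ s)
  rwa [numBlocks_bot] at this

lemma numOrbits_le_card (π : Perm α) : numOrbits π ≤ Nat.card α :=
  numBlocks_le_card _

lemma numOrbits_add_one_le_card {π : Perm α} {a b : α} (hab : a ≠ b)
    (h : π.SameCycle a b) : numOrbits π + 1 ≤ Nat.card α := by
  have hbot : ¬ (⊥ : Setoid α) a b := by
    intro hc
    rw [Setoid.bot_def] at hc
    exact hab hc
  have := numBlocks_add_one_le (bot_le : ⊥ ≤ orbitSetoid {π})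
    (orbitSetoid_singleton_rel.mpr h) hbot
  rwa [numBlocks_bot] at this

lemma len_one : len (1 : Perm α) = 0 := by
  have hle : orbitSetoid {(1 : Perm α)} ≤ ⊥ :=
    orbitSetoid_singleton_le fun x => Setoid.refl' ⊥ x
  have : numOrbits (1 : Perm α) = Nat.card α := by
    have h1 := numBlocks_mono hle
    have h2 := numBlocks_le_card (orbitSetoid {(1 : Perm α)})
    have e : numOrbits (1 : Perm α) = numBlocks (orbitSetoid {(1 : Perm α)}) := rfl
    rw [numBlocks_bot] at h1
    omega
  rw [len, this]
  omega

lemma exists_swap_factorization (g : Perm α) :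
    ∃ l : List (Perm α), (∀ x ∈ l, x.IsSwap) ∧ l.prod = g ∧ l.length = len g := by
  generalize hN : len g = N
  induction N using Nat.strong_induction_on generalizing g with
  | _ N ih =>
    by_cases hg : g = 1
    · subst hg
      refine ⟨[], by simp, by simp, by simp [← hN, len_one]⟩
    · have hx : ∃ x, g x ≠ x := by
        by_contra hc
        push_neg at hc
        exact hg (Equiv.ext hc)
      obtain ⟨x, hxne⟩ := hx
      have hab : x ≠ g x := Ne.symm hxne
      have hsc : g.SameCycle x (g x) := ⟨1, by simp⟩
      have h1 := numOrbits_mul_swap_cut hab hsc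
      have h2 := numOrbits_mul_swap_le_add_one g x (g x)
      have h3 := numOrbits_add_one_le_card hab hsc
      have e1 : len (g * Equiv.swap x (g x)) = Nat.card α - numOrbits (g * Equiv.swap x (g x)) := rfl
      have e2 : len g = Nat.card α - numOrbits g := rfl
      have hlt : len (g * Equiv.swap x (g x)) < N := by omega
      obtain ⟨l', hsw, hprod, hlen⟩ := ih _ hlt (g * Equiv.swap x (g x)) rfl
      refine ⟨l' ++ [Equiv.swap x (g x)], ?_, ?_, ?_⟩
      · intro y hy
        rcases List.mem_append.mp hy with hy | hy
        · exact hsw y hy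
        · rw [List.mem_singleton.mp hy]
          exact ⟨x, g x, hab, rfl⟩
      · rw [List.prod_append, List.prod_singleton, hprod, mul_assoc, swap_mul_self, mul_one]
      · rw [List.length_append, List.length_singleton, hlen]
        omega

lemma even_length_add_of_swap_factorizations [DecidableEq α] [Fintype α]
    {l1 l2 : List (Perm α)} (h1 : ∀ x ∈ l1, x.IsSwap) (h2 : ∀ x ∈ l2, x.IsSwap)
    (hp : l1.prod = l2.prod) : Even (l1.length + l2.length) := by
  have e1 := Equiv.Perm.sign_prod_list_swap h1
  have e2 := Equiv.Perm.sign_prod_list_swap h2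
  rw [hp, e2] at e1
  have e4 : ((-1 : ℤˣ)) ^ (l1.length + l2.length) = 1 := by
    rw [pow_add, ← e1, ← pow_add, ← two_mul, pow_mul]
    norm_num
  exact (neg_one_pow_eq_one_iff_even (by decide)).mp e4

end Statement9Card

section Statement9Pot

variable {n D : ℕ}

noncomputable def colProd (L : List (Fin D × Perm (Fin n))) (c : Fin D) : Perm (Fin n) :=
  ((L.filter (fun e => e.1 = c)).map Prod.snd).prod

def swapSet (L : List (Fin D × Perm (Fin n))) : Set (Perm (Fin n)) :=
  {g | ∃ e ∈ L, e.2 = g}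

lemma colProd_append_same (L : List (Fin D × Perm (Fin n))) (c : Fin D) (t : Perm (Fin n)) :
    colProd (L ++ [(c, t)]) c = colProd L c * t := by
  unfold colProd
  rw [List.filter_append, List.map_append, List.prod_append]
  congr 1
  simp

lemma colProd_append_ne (L : List (Fin D × Perm (Fin n))) {c c' : Fin D} (h : c' ≠ c)
    (t : Perm (Fin n)) : colProd (L ++ [(c', t)]) c = colProd L c := by
  unfold colProd
  rw [List.filter_append]
  simp [h]

lemma swapSet_append (L : List (Fin D × Perm (Fin n))) (e : Fin D × Perm (Fin n)) :
    swapSet (L ++ [e]) = swapSet L ∪ {e.2} := by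
  ext g
  simp only [swapSet, Set.mem_setOf_eq, List.mem_append, List.mem_singleton,
    Set.mem_union, Set.mem_singleton_iff]
  constructor
  · rintro ⟨e', (he | rfl), hg⟩
    · exact Or.inl ⟨e', he, hg⟩
    · exact Or.inr hg.symm
  · rintro (⟨e', he, hg⟩ | hg)
    · exact ⟨e', Or.inl he, hg⟩
    · exact ⟨e, Or.inr rfl, hg.symm⟩

lemma lam_append (Pi : Setoid (Fin n)) (L : List (Fin D × Perm (Fin n))) (c : Fin D)
    (a b : Fin n) :
    Pi ⊔ orbitSetoid (swapSet (L ++ [(c, Equiv.swap a b)]))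
      = (Pi ⊔ orbitSetoid (swapSet L)) ⊔ edgeSetoid a b := by
  rw [swapSet_append]
  show Pi ⊔ orbitSetoid (swapSet L ∪ {Equiv.swap a b}) = _
  rw [orbitSetoid_union, orbitSetoid_swap, sup_assoc]

lemma colProd_mem_closure (L : List (Fin D × Perm (Fin n))) (c : Fin D) :
    colProd L c ∈ Subgroup.closure (swapSet L) := by
  apply Subgroup.list_prod_mem
  intro x hx
  obtain ⟨e, he, rfl⟩ := List.mem_map.mp hx
  exact Subgroup.subset_closure ⟨e, List.mem_of_mem_filter he, rfl⟩

lemma pot (Pi : Setoid (Fin n)) :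
    ∀ L : List (Fin D × Perm (Fin n)), (∀ e ∈ L, e.2.IsSwap) →
    (∑ c : Fin D, len (colProd L c))
      + 2 * (∑ c : Fin D, numBlocks (Pi ⊔ orbitSetoid {colProd L c}))
      + 2 * numBlocks Pi
    ≤ L.length + 2 * D * numBlocks Pi
      + 2 * numBlocks (Pi ⊔ orbitSetoid (swapSet L)) := by
  intro L
  induction L using List.reverseRecOn with
  | nil =>
    intro _
    have hc : ∀ c : Fin D, colProd ([] : List (Fin D × Perm (Fin n))) c = 1 := fun _ => rfl
    have h1 : ∀ c : Fin D, len (colProd ([] : List (Fin D × Perm (Fin n))) c) = 0 := by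
      intro c; rw [hc]; exact len_one
    have h2 : ∀ c : Fin D,
        Pi ⊔ orbitSetoid {colProd ([] : List (Fin D × Perm (Fin n))) c} = Pi := by
      intro c
      rw [hc]
      exact sup_eq_left.mpr (orbitSetoid_singleton_le fun x => Setoid.refl' Pi x)
    have h3 : Pi ⊔ orbitSetoid (swapSet ([] : List (Fin D × Perm (Fin n)))) = Pi := by
      refine sup_eq_left.mpr (orbitSetoid_le ?_)
      rintro g ⟨e, he, _⟩
      simp at he
    rw [Finset.sum_congr rfl fun c _ => h1 c,
      Finset.sum_congr rfl fun c _ => congrArg numBlocks (h2 c), h3]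
    simp [Finset.sum_const, Finset.card_univ, mul_assoc]
  | append_singleton L e ih =>
    intro hsw
    obtain ⟨c₀, t⟩ := e
    have ht : Equiv.Perm.IsSwap t := hsw (c₀, t) (by simp)
    obtain ⟨a, b, hab, rfl⟩ := ht
    have ihyp := ih fun e he => hsw e (List.mem_append_left _ he)
    have hnew_c0 : colProd (L ++ [(c₀, Equiv.swap a b)]) c₀
        = colProd L c₀ * Equiv.swap a b := colProd_append_same L c₀ _
    have hnew_ne : ∀ c, c ≠ c₀ → colProd (L ++ [(c₀, Equiv.swap a b)]) c = colProd L c :=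
      fun c h => colProd_append_ne L (fun hh => h hh.symm) _
    have hagree1 : ∑ c ∈ Finset.univ.erase c₀, len (colProd (L ++ [(c₀, Equiv.swap a b)]) c)
        = ∑ c ∈ Finset.univ.erase c₀, len (colProd L c) :=
      Finset.sum_congr rfl fun c hc => by rw [hnew_ne c (Finset.ne_of_mem_erase hc)]
    have hagree2 : ∑ c ∈ Finset.univ.erase c₀,
          numBlocks (Pi ⊔ orbitSetoid {colProd (L ++ [(c₀, Equiv.swap a b)]) c})
        = ∑ c ∈ Finset.univ.erase c₀, numBlocks (Pi ⊔ orbitSetoid {colProd L c}) :=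
      Finset.sum_congr rfl fun c hc => by rw [hnew_ne c (Finset.ne_of_mem_erase hc)]
    have hg1 : ∑ c : Fin D, len (colProd (L ++ [(c₀, Equiv.swap a b)]) c)
        = (∑ c ∈ Finset.univ.erase c₀, len (colProd L c))
          + len (colProd L c₀ * Equiv.swap a b) := by
      rw [← Finset.sum_erase_add _ _ (Finset.mem_univ c₀)]
      simp only [hagree1, hnew_c0]
    have hg2 : ∑ c : Fin D, numBlocks (Pi ⊔ orbitSetoid {colProd (L ++ [(c₀, Equiv.swap a b)]) c})
        = (∑ c ∈ Finset.univ.erase c₀, numBlocks (Pi ⊔ orbitSetoid {colProd L c}))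
          + numBlocks (Pi ⊔ orbitSetoid {colProd L c₀ * Equiv.swap a b}) := by
      rw [← Finset.sum_erase_add _ _ (Finset.mem_univ c₀)]
      simp only [hagree2, hnew_c0]
    have hg3 : numBlocks (Pi ⊔ orbitSetoid (swapSet (L ++ [(c₀, Equiv.swap a b)])))
        = numBlocks ((Pi ⊔ orbitSetoid (swapSet L)) ⊔ edgeSetoid a b) :=
      congrArg numBlocks (lam_append Pi L c₀ a b)
    have hi1 : ∑ c : Fin D, len (colProd L c)
        = (∑ c ∈ Finset.univ.erase c₀, len (colProd L c)) + len (colProd L c₀) := by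
      rw [← Finset.sum_erase_add _ _ (Finset.mem_univ c₀)]
    have hi2 : ∑ c : Fin D, numBlocks (Pi ⊔ orbitSetoid {colProd L c})
        = (∑ c ∈ Finset.univ.erase c₀, numBlocks (Pi ⊔ orbitSetoid {colProd L c}))
          + numBlocks (Pi ⊔ orbitSetoid {colProd L c₀}) := by
      rw [← Finset.sum_erase_add _ _ (Finset.mem_univ c₀)]
    have hlength : (L ++ [(c₀, Equiv.swap a b)]).length = L.length + 1 := by simp
    have hsLam : orbitSetoid {colProd L c₀} ≤ Pi ⊔ orbitSetoid (swapSet L) := by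
      refine le_trans ?_ (le_sup_right : orbitSetoid (swapSet L) ≤ _)
      exact orbitSetoid_singleton_le fun x =>
        rel_of_mem_closure (colProd_mem_closure L c₀) x
    have huLam : Pi ⊔ orbitSetoid {colProd L c₀} ≤ Pi ⊔ orbitSetoid (swapSet L) :=
      sup_le le_sup_left hsLam
    have hu'_le : Pi ⊔ orbitSetoid {colProd L c₀ * Equiv.swap a b}
        ≤ (Pi ⊔ orbitSetoid {colProd L c₀}) ⊔ edgeSetoid a b := by
      have h0 : Pi ⊔ orbitSetoid {colProd L c₀ * Equiv.swap a b}
          ≤ Pi ⊔ (orbitSetoid {colProd L c₀} ⊔ edgeSetoid a b) :=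
        sup_le_sup_left (orbitSetoid_mul_swap_le (colProd L c₀) a b) Pi
      rwa [← sup_assoc] at h0
    have hu_le : Pi ⊔ orbitSetoid {colProd L c₀}
        ≤ (Pi ⊔ orbitSetoid {colProd L c₀ * Equiv.swap a b}) ⊔ edgeSetoid a b := by
      have h0 : Pi ⊔ orbitSetoid {colProd L c₀}
          ≤ Pi ⊔ (orbitSetoid {colProd L c₀ * Equiv.swap a b} ⊔ edgeSetoid a b) :=
        sup_le_sup_left (orbitSetoid_le_mul_swap (colProd L c₀) a b) Pi
      rwa [← sup_assoc] at h0
    have hj1 : numBlocks ((Pi ⊔ orbitSetoid {colProd L c₀}) ⊔ edgeSetoid a b)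
        ≤ numBlocks (Pi ⊔ orbitSetoid {colProd L c₀ * Equiv.swap a b}) := numBlocks_mono hu'_le
    have hj2 : numBlocks (Pi ⊔ orbitSetoid {colProd L c₀ * Equiv.swap a b})
        ≤ numBlocks ((Pi ⊔ orbitSetoid {colProd L c₀ * Equiv.swap a b}) ⊔ edgeSetoid a b) + 1 :=
      numBlocks_sub_one_le _ a b
    have hj3 : numBlocks ((Pi ⊔ orbitSetoid {colProd L c₀ * Equiv.swap a b}) ⊔ edgeSetoid a b)
        ≤ numBlocks (Pi ⊔ orbitSetoid {colProd L c₀}) := numBlocks_mono hu_le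
    have hj4 : numBlocks ((Pi ⊔ orbitSetoid {colProd L c₀}) ⊔ edgeSetoid a b)
        ≤ numBlocks (Pi ⊔ orbitSetoid {colProd L c₀}) := numBlocks_mono le_sup_left
    have hcard : Nat.card (Fin n) = n := by simp
    have hlen_e1 : len (colProd L c₀ * Equiv.swap a b)
        = n - numOrbits (colProd L c₀ * Equiv.swap a b) := by rw [len, hcard]
    have hlen_e2 : len (colProd L c₀) = n - numOrbits (colProd L c₀) := by rw [len, hcard]
    have hno1 : numOrbits (colProd L c₀ * Equiv.swap a b) ≤ n := by
      have h0 := numOrbits_le_card (colProd L c₀ * Equiv.swap a b)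
      rwa [hcard] at h0
    have hno2 : numOrbits (colProd L c₀) ≤ n := by
      have h0 := numOrbits_le_card (colProd L c₀)
      rwa [hcard] at h0
    have hlen1 : numOrbits (colProd L c₀) ≤ numOrbits (colProd L c₀ * Equiv.swap a b) + 1 :=
      numOrbits_le_mul_swap_add_one (colProd L c₀) a b
    by_cases hsc : (colProd L c₀).SameCycle a b
    · -- cut case
      have hcut : numOrbits (colProd L c₀) + 1 ≤ numOrbits (colProd L c₀ * Equiv.swap a b) :=
        numOrbits_mul_swap_cut hab hsc
      have hLamab : (Pi ⊔ orbitSetoid (swapSet L)) a b :=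
        Setoid.le_def.mp hsLam (orbitSetoid_singleton_rel.mpr hsc)
      have hLamEq : numBlocks ((Pi ⊔ orbitSetoid (swapSet L)) ⊔ edgeSetoid a b)
          = numBlocks (Pi ⊔ orbitSetoid (swapSet L)) :=
        congrArg numBlocks (sup_edge_of_rel hLamab)
      omega
    · -- join case
      have hjoin : orbitSetoid {colProd L c₀ * Equiv.swap a b}
          = orbitSetoid {colProd L c₀} ⊔ edgeSetoid a b :=
        orbitSetoid_mul_swap_join hab hsc
      have hnbu' : numBlocks (Pi ⊔ orbitSetoid {colProd L c₀ * Equiv.swap a b})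
          = numBlocks ((Pi ⊔ orbitSetoid {colProd L c₀}) ⊔ edgeSetoid a b) := by
        rw [hjoin, ← sup_assoc]
      by_cases hLab : (Pi ⊔ orbitSetoid (swapSet L)) a b
      · have hLamEq : numBlocks ((Pi ⊔ orbitSetoid (swapSet L)) ⊔ edgeSetoid a b)
            = numBlocks (Pi ⊔ orbitSetoid (swapSet L)) :=
          congrArg numBlocks (sup_edge_of_rel hLab)
        omega
      · have hnbLam : numBlocks ((Pi ⊔ orbitSetoid (swapSet L)) ⊔ edgeSetoid a b) + 1
            = numBlocks (Pi ⊔ orbitSetoid (swapSet L)) :=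
          numBlocks_sup_edge_of_not_rel hLab
        have hnuab : ¬ (Pi ⊔ orbitSetoid {colProd L c₀}) a b :=
          fun hc => hLab (Setoid.le_def.mp huLam hc)
        have hnbu : numBlocks ((Pi ⊔ orbitSetoid {colProd L c₀}) ⊔ edgeSetoid a b) + 1
            = numBlocks (Pi ⊔ orbitSetoid {colProd L c₀}) :=
          numBlocks_sup_edge_of_not_rel hnuab
        omega

end Statement9Pot

section Statement9Final

variable {n D : ℕ}

lemma colProd_append (A B : List (Fin D × Perm (Fin n))) (c : Fin D) :
    colProd (A ++ B) c = colProd A c * colProd B c := by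
  unfold colProd
  rw [List.filter_append, List.map_append, List.prod_append]

lemma colProd_block (c' c : Fin D) (l : List (Perm (Fin n))) :
    colProd (l.map fun g => (c', g)) c = if c' = c then l.prod else 1 := by
  induction l with
  | nil => by_cases h : c' = c <;> simp [colProd, h]
  | cons g l ihl =>
    by_cases h : c' = c <;>
      simp_all [colProd, List.filter_cons, h, List.prod_cons]


lemma list_prod_ite_one {M : Type*} [Monoid M] (P : Fin D → M) (c : Fin D) :
    ∀ l : List (Fin D), c ∉ l → (l.map fun c' => if c' = c then P c' else 1).prod = 1 := by
  intro l
  induction l with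
  | nil => simp
  | cons c' l ihl =>
    intro hc
    rw [List.map_cons, List.prod_cons,
      if_neg (by rintro rfl; exact hc (List.mem_cons_self)), one_mul]
    exact ihl fun h => hc (List.mem_cons_of_mem _ h)

lemma list_prod_ite_eq {M : Type*} [Monoid M] (P : Fin D → M) (c : Fin D) :
    ∀ l : List (Fin D), l.Nodup → c ∈ l →
      (l.map fun c' => if c' = c then P c' else 1).prod = P c := by
  intro l
  induction l with
  | nil => intro _ h; simp at h
  | cons c' l ihl =>
    intro hnd hc
    rw [List.map_cons, List.prod_cons]
    rcases List.mem_cons.mp hc with rfl | hc'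
    · rw [if_pos rfl, list_prod_ite_one P c l (List.nodup_cons.mp hnd).1, mul_one]
    · have hne : c' ≠ c := by rintro rfl; exact (List.nodup_cons.mp hnd).1 hc'
      rw [if_neg hne, one_mul]
      exact ihl (List.nodup_cons.mp hnd).2 hc'

lemma colProd_flatMap (F : Fin D → List (Perm (Fin n))) (c : Fin D) :
    colProd ((List.finRange D).flatMap fun c' => (F c').map fun g => (c', g)) c
      = (F c).prod := by
  have key : ∀ l : List (Fin D),
      colProd (l.flatMap fun c' => (F c').map fun g => (c', g)) c
        = (l.map fun c' => if c' = c then (F c').prod else 1).prod := by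
    intro l
    induction l with
    | nil => rfl
    | cons c' l ihl =>
      rw [List.flatMap_cons, colProd_append, colProd_block, List.map_cons,
        List.prod_cons, ihl]
  rw [key (List.finRange D)]
  exact list_prod_ite_eq _ c _ (List.nodup_finRange D) (List.mem_finRange c)

lemma length_flatMap_col (F : Fin D → List (Perm (Fin n))) :
    ((List.finRange D).flatMap fun c' => (F c').map fun g => (c', g)).length
      = ∑ c : Fin D, (F c).length := by
  rw [List.length_flatMap]
  have h : ∀ c' : Fin D,
      ((fun c'' => ((F c'').map fun g => (c'', g)).length) c') = (F c').length := by
    intro c'; simp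
  calc (List.map ((fun l : List (Fin D × Perm (Fin n)) => l.length) ∘
          fun c' => (F c').map fun g => (c', g)) (List.finRange D)).sum
      = (List.map (fun c' => (F c').length) (List.finRange D)).sum := by
        congr 1
        exact List.map_congr_left fun c' _ => by simp
    _ = ∑ c : Fin D, (F c).length := (Fin.sum_univ_def _).symm

end Statement9Final


/-- `m_C(σ,τ;l,k)` vanishes unless `l ≥ ℓ(σ,τ)` and `l − ℓ(σ,τ)` is even,
i.e. a nonzero count forces `l = ℓ(σ,τ) + 2m` for some `m : ℕ`. -/
theorem statement9 {n D : ℕ} (hn : 1 ≤ n) (hD : 1 ≤ D)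
    (σ τ : Fin D → Equiv.Perm (Fin n)) :
    ∀ l k : ℕ, mC σ τ l k ≠ 0 →
      ∃ m : ℕ,
        l = ((∑ c, len (σ c * (τ c)⁻¹)) + 2 * (numBlocks (jointSetoid σ τ) - 1)) + 2 * m := by
  intro l k hm
  obtain ⟨⟨⟨ρ, _, hprod, _, hl, htop⟩⟩, _⟩ := Nat.card_ne_zero.mp hm
  have hdec := fun g : Equiv.Perm (Fin n) => exists_swap_factorization g
  choose f hf1 hf2 hf3 using hdec
  set Lc : Fin D → List (Equiv.Perm (Fin n)) := fun c => ((ρ c).map f).flatten with hLcdef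
  have hLc_swap : ∀ c, ∀ x ∈ Lc c, x.IsSwap := by
    intro c x hx
    simp only [hLcdef] at hx
    obtain ⟨lx, hlx, hxl⟩ := List.mem_flatten.mp hx
    obtain ⟨r, hr, rfl⟩ := List.mem_map.mp hlx
    exact hf1 r x hxl
  have hLc_prod : ∀ c, (Lc c).prod = σ c * (τ c)⁻¹ := by
    intro c
    simp only [hLcdef]
    rw [List.prod_flatten, List.map_map]
    rw [show List.map (List.prod ∘ f) (ρ c) = List.map id (ρ c) from
      List.map_congr_left fun r _ => hf2 r, List.map_id]
    exact hprod c
  have hLc_len : ∀ c, (Lc c).length = ((ρ c).map len).sum := by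
    intro c
    simp only [hLcdef]
    rw [List.length_flatten, List.map_map]
    rw [show List.map (List.length ∘ f) (ρ c) = List.map len (ρ c) from
      List.map_congr_left fun r _ => hf3 r]
  set L : List (Fin D × Equiv.Perm (Fin n)) :=
    (List.finRange D).flatMap (fun c' => (Lc c').map fun g => (c', g)) with hLdef
  have hLsw : ∀ e ∈ L, e.2.IsSwap := by
    intro e he
    simp only [hLdef] at he
    obtain ⟨c, hc, he2⟩ := List.mem_flatMap.mp he
    obtain ⟨g, hg, rfl⟩ := List.mem_map.mp he2
    exact hLc_swap c g hg
  have hν : ∀ c, colProd L c = σ c * (τ c)⁻¹ := by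
    intro c
    rw [hLdef]
    exact (colProd_flatMap Lc c).trans (hLc_prod c)
  have hLlen : L.length = l := by
    rw [hLdef]
    calc ((List.finRange D).flatMap fun c' => (Lc c').map fun g => (c', g)).length
        = ∑ c : Fin D, (Lc c).length := length_flatMap_col Lc
      _ = ∑ c : Fin D, ((ρ c).map len).sum := Finset.sum_congr rfl fun c _ => hLc_len c
      _ = l := hl
  have hmemL : ∀ c, ∀ x ∈ Lc c, (c, x) ∈ L := by
    intro c x hx
    rw [hLdef]
    exact List.mem_flatMap.mpr ⟨c, List.mem_finRange c, List.mem_map.mpr ⟨x, hx, rfl⟩⟩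
  have htop' : jointSetoid σ τ ⊔ orbitSetoid (swapSet L) = ⊤ := by
    refine eq_top_iff.mpr ?_
    rw [← htop]
    apply orbitSetoid_le
    intro g hg x
    rcases hg with hg | hg
    · exact Setoid.le_def.mp le_sup_left (rel_of_mem hg x)
    · obtain ⟨c, hgc⟩ := Set.mem_iUnion.mp hg
      have hmem : g ∈ Subgroup.closure (swapSet L) := by
        rw [← hf2 g]
        apply Subgroup.list_prod_mem
        intro x' hx'
        refine Subgroup.subset_closure ⟨(c, x'), hmemL c x' ?_, rfl⟩
        simp only [hLcdef]
        exact List.mem_flatten.mpr ⟨f g, List.mem_map.mpr ⟨g, hgc, rfl⟩, hx'⟩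
      exact Setoid.le_def.mp le_sup_right (rel_of_mem_closure hmem x)
  have hb1 : numBlocks (⊤ : Setoid (Fin n)) = 1 := by
    have hsub : Subsingleton (Quotient (⊤ : Setoid (Fin n))) := by
      constructor
      rintro ⟨x⟩ ⟨y⟩
      exact Quot.sound (by rw [Setoid.top_def]; trivial)
    exact Nat.card_eq_one_iff_unique.mpr ⟨hsub, ⟨Quotient.mk _ ⟨0, hn⟩⟩⟩
  have hPi_fix : ∀ c : Fin D, jointSetoid σ τ ⊔ orbitSetoid {colProd L c} = jointSetoid σ τ := by
    intro c
    rw [hν c]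
    refine sup_eq_left.mpr (orbitSetoid_singleton_le fun x => ?_)
    exact rel_of_mem_closure
      (mul_mem (Subgroup.subset_closure (Or.inl ⟨c, rfl⟩))
        (inv_mem (Subgroup.subset_closure (Or.inr ⟨c, rfl⟩)))) x
  have hP := pot (jointSetoid σ τ) L hLsw
  have hsum1 : ∑ c : Fin D, len (colProd L c) = ∑ c, len (σ c * (τ c)⁻¹) :=
    Finset.sum_congr rfl fun c _ => by rw [hν c]
  have hsum2 : ∑ c : Fin D, numBlocks (jointSetoid σ τ ⊔ orbitSetoid {colProd L c})
      = D * numBlocks (jointSetoid σ τ) := by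
    rw [Finset.sum_congr rfl fun c _ => congrArg numBlocks (hPi_fix c)]
    rw [Finset.sum_const, Finset.card_univ, Fintype.card_fin, smul_eq_mul]
  have hlam1 : numBlocks (jointSetoid σ τ ⊔ orbitSetoid (swapSet L)) = 1 := by
    rw [htop', hb1]
  rw [hsum1, hsum2, hlam1, hLlen] at hP
  have hnefin : Nonempty (Fin n) := ⟨⟨0, hn⟩⟩
  have hb_pos : 1 ≤ numBlocks (jointSetoid σ τ) := numBlocks_pos _
  have hassoc : 2 * D * numBlocks (jointSetoid σ τ)
      = 2 * (D * numBlocks (jointSetoid σ τ)) := mul_assoc 2 D _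
  rw [hassoc] at hP
  have h1 : (∑ c, len (σ c * (τ c)⁻¹)) + 2 * (D * numBlocks (jointSetoid σ τ))
        + 2 * numBlocks (jointSetoid σ τ)
      = ((∑ c, len (σ c * (τ c)⁻¹)) + 2 * numBlocks (jointSetoid σ τ))
        + 2 * (D * numBlocks (jointSetoid σ τ)) := by ring
  have h2 : l + 2 * (D * numBlocks (jointSetoid σ τ)) + 2 * 1
      = (l + 2) + 2 * (D * numBlocks (jointSetoid σ τ)) := by ring
  rw [h1, h2] at hP
  have hfin : (∑ c, len (σ c * (τ c)⁻¹)) + 2 * numBlocks (jointSetoid σ τ) ≤ l + 2 :=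
    le_of_add_le_add_right hP
  have heven : Even (∑ c : Fin D, (((ρ c).map len).sum + len (σ c * (τ c)⁻¹))) := by
    refine Finset.sum_induction _ Even (fun a b ha hb => ha.add hb) Even.zero ?_
    intro c _
    have h := even_length_add_of_swap_factorizations (hLc_swap c) (hf1 (σ c * (τ c)⁻¹))
      (by rw [hLc_prod c, hf2])
    rwa [hLc_len c, hf3] at h
  rw [Finset.sum_add_distrib, hl] at heven
  obtain ⟨w, hw⟩ := heven
  exact ⟨w - (∑ c, len (σ c * (τ c)⁻¹)) - (numBlocks (jointSetoid σ τ) - 1), by omega⟩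

end PaperHCIZ
end

section
/- Let S be a finite nonempty set, D ≥ 1, and let Π, π_1,…,π_D, Π_1,…,Π_D be partitions of S such that Π_c ≤ Π and Π_c ≤ π_c for every c ∈ {1,…,D} (≤ being the refinement order). Define a graph G whose vertex set is the disjoint union of the set of blocks of Π and, for each c, the set of blocks of π_c, with an edge between a block B of Π and a block B_c of π_c whenever some block of Π_c is contained in both B and B_c (there are no other edges). Then the number of connected components of G equals the number of blocks of the join Π ∨ π_1 ∨ … ∨ π_D. -/
open Equiv Finset
open scoped Classical

namespace PaperHCIZ

variable {α : Type*}

variable {n D : ℕ}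

/-- the bipartite incidence graph between the blocks of `P` and the blocks of
the `π_c`, with an edge whenever some block of `Π_c` is contained in both, has as many
connected components as the join `P ⊔ π_1 ⊔ … ⊔ π_D` has blocks. -/
theorem statement10 {S : Type*} [Finite S] [Nonempty S] {D : ℕ} (hD : 1 ≤ D)
    (P : Setoid S) (ps Pc : Fin D → Setoid S)
    (h1 : ∀ c, Pc c ≤ P) (h2 : ∀ c, Pc c ≤ ps c) :
    Nat.card (SimpleGraph.ConnectedComponent (SimpleGraph.fromRel
      (fun v w : Quotient P ⊕ (Σ c : Fin D, Quotient (ps c)) =>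
        match v, w with
        | Sum.inl B, Sum.inr p =>
            ∃ b : Quotient (Pc p.1),
              (∀ x : S, Quotient.mk (Pc p.1) x = b → Quotient.mk P x = B) ∧
              (∀ x : S, Quotient.mk (Pc p.1) x = b → Quotient.mk (ps p.1) x = p.2)
        | _, _ => False)))
      = numBlocks (P ⊔ ⨆ c, ps c) := by
  classical
  set G := (SimpleGraph.fromRel
      (fun v w : Quotient P ⊕ (Σ c : Fin D, Quotient (ps c)) =>
        match v, w with
        | Sum.inl B, Sum.inr p =>
            ∃ b : Quotient (Pc p.1),
              (∀ x : S, Quotient.mk (Pc p.1) x = b → Quotient.mk P x = B) ∧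
              (∀ x : S, Quotient.mk (Pc p.1) x = b → Quotient.mk (ps p.1) x = p.2)
        | _, _ => False)) with hG
  set J := P ⊔ ⨆ c, ps c with hJ
  have hPJ : P ≤ J := le_sup_left
  have hpsJ : ∀ c, ps c ≤ J := fun c => le_trans (le_iSup ps c) le_sup_right
  -- basic adjacency
  have hadj : ∀ (c : Fin D) (x : S),
      G.Adj (Sum.inl (Quotient.mk P x)) (Sum.inr ⟨c, Quotient.mk (ps c) x⟩) := by
    intro c x
    rw [hG, SimpleGraph.fromRel_adj]
    refine ⟨by simp, Or.inl ?_⟩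
    refine ⟨Quotient.mk (Pc c) x, ?_, ?_⟩ <;> intro y hy
    · exact Quotient.sound (h1 c (Quotient.exact hy))
    · exact Quotient.sound (h2 c (Quotient.exact hy))
  -- representative of each vertex
  set rep : Quotient P ⊕ (Σ c : Fin D, Quotient (ps c)) → S :=
    fun v => match v with
      | Sum.inl B => B.out
      | Sum.inr p => p.2.out with hrepdef
  have hrep : ∀ v, G.Reachable (Sum.inl (Quotient.mk P (rep v))) v := by
    rintro (B | ⟨c, p⟩)
    · show G.Reachable (Sum.inl (Quotient.mk P B.out)) (Sum.inl B)
      rw [Quotient.out_eq]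
    · have h := (hadj c p.out).reachable
      rw [Quotient.out_eq] at h
      exact h
  -- adjacency implies J-equivalence of representatives
  have hf : ∀ v w, G.Adj v w → Quotient.mk J (rep v) = Quotient.mk J (rep w) := by
    have key : ∀ (B : Quotient P) (p : Σ c : Fin D, Quotient (ps c)),
        (∃ b : Quotient (Pc p.1),
          (∀ x : S, Quotient.mk (Pc p.1) x = b → Quotient.mk P x = B) ∧
          (∀ x : S, Quotient.mk (Pc p.1) x = b → Quotient.mk (ps p.1) x = p.2)) →
        Quotient.mk J (rep (Sum.inl B)) = Quotient.mk J (rep (Sum.inr p)) := by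
      rintro B ⟨c, p⟩ ⟨b, hbP, hbp⟩
      have h1' : Quotient.mk P b.out = B := hbP b.out (Quotient.out_eq b)
      have h2' : Quotient.mk (ps c) b.out = p := hbp b.out (Quotient.out_eq b)
      have e1 : Quotient.mk J B.out = Quotient.mk J b.out := by
        refine Quotient.sound (hPJ (Quotient.exact ?_))
        rw [Quotient.out_eq, h1']
      have e2 : Quotient.mk J b.out = Quotient.mk J p.out := by
        refine Quotient.sound (hpsJ c (Quotient.exact ?_))
        rw [Quotient.out_eq, h2']
      exact e1.trans e2
    rintro (B | q) (B' | q') hvw <;>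
      rw [hG, SimpleGraph.fromRel_adj] at hvw <;>
      obtain ⟨hne, h | h⟩ := hvw
    · exact absurd h id
    · exact absurd h id
    · exact key B q' h
    · exact absurd h id
    · exact absurd h id
    · exact (key B' q h).symm
    · exact absurd h id
    · exact absurd h id
  -- reachability implies J-equivalence
  have hwalk : ∀ v w, G.Reachable v w → Quotient.mk J (rep v) = Quotient.mk J (rep w) := by
    intro v w h
    obtain ⟨p⟩ := h
    induction p with
    | nil => rfl
    | cons h p ih => exact (hf _ _ h).trans ih
  -- J-equivalence implies reachability
  have hJK : ∀ x y : S, J.r x y →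
      G.Reachable (Sum.inl (Quotient.mk P x)) (Sum.inl (Quotient.mk P y)) := by
    have hK : ∀ x y : S, (P ⊔ ⨆ c, ps c) ≤
        ⟨fun x y => G.Reachable (Sum.inl (Quotient.mk P x)) (Sum.inl (Quotient.mk P y)),
          ⟨fun _ => SimpleGraph.Reachable.refl _, fun h => h.symm, fun h h' => h.trans h'⟩⟩ := by
      intro x y
      refine sup_le ?_ (iSup_le fun c => ?_)
      · intro a b h
        show G.Reachable _ _
        rw [Quotient.sound h]
      · intro a b h
        have h' : Quotient.mk (ps c) a = Quotient.mk (ps c) b := Quotient.sound h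
        have r2 : G.Reachable (Sum.inr ⟨c, Quotient.mk (ps c) a⟩)
            (Sum.inl (Quotient.mk P b)) := by
          rw [h']; exact (hadj c b).reachable.symm
        exact (hadj c a).reachable.trans r2
    intro x y h
    exact hK x y h
  -- the bijection
  refine Nat.card_congr (Equiv.mk
    (Quot.lift (fun v => Quotient.mk J (rep v)) hwalk)
    (Quotient.lift (fun x => G.connectedComponentMk (Sum.inl (Quotient.mk P x)))
      (fun x y h => SimpleGraph.ConnectedComponent.sound (hJK x y h)))
    ?_ ?_)
  · intro C
    induction C using SimpleGraph.ConnectedComponent.ind with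
    | _ v => exact SimpleGraph.ConnectedComponent.sound (hrep v)
  · intro q
    induction q using Quotient.ind with
    | _ x =>
      show Quotient.mk J (rep (Sum.inl (Quotient.mk P x))) = Quotient.mk J x
      refine Quotient.sound (hPJ (Quotient.exact ?_))
      show Quotient.mk P (Quotient.mk P x).out = Quotient.mk P x
      rw [Quotient.out_eq]

end PaperHCIZ
end
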